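/- arXiv:nlin/0611006 — 7 statements merged into one kernel-verified Lean document; each statement's English description precedes it below -/
import Mathlib

section
/- Let b = e_{12} + e_{23} + ⋯ + e_{n-1,n}, a = diag(1, α, …, α^{n-1}), and Λ = Σ_{k=1}^{n-1} σ_k e_{k+1,k} with σ_k = (1-α^k)/(1-α) and α = e^{2πi/n}. Then for every k ≥ 1, [b, Λ^k] = σ_k Λ^{k-1} a. -/
open Matrix Finset

noncomputable section

/-- α = e^{2πi/n}, a primitive n-th root of unity. -/
noncomputable def rootα (n : ℕ) : ℂ := Complex.exp (2 * Real.pi * Complex.I / n)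

/-- σ_k = (1-α^k)/(1-α). -/
noncomputable def sigc (n k : ℕ) : ℂ := (1 - rootα n ^ k) / (1 - rootα n)

/-- Λ = Σ_{k=1}^{n-1} σ_k e_{k+1,k} (1-based), i.e. entry (j+1, j) is σ_{j+1} in 0-based indices. -/
noncomputable def Lam (n : ℕ) : Matrix (Fin n) (Fin n) ℂ :=
  Matrix.of (fun i j => if (i : ℕ) = (j : ℕ) + 1 then sigc n ((j : ℕ) + 1) else 0)

/-- b = e_{12} + e_{23} + ⋯ + e_{n-1,n}, the upper shift matrix. -/
def bMat (n : ℕ) : Matrix (Fin n) (Fin n) ℂ :=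
  Matrix.of (fun i j => if (j : ℕ) = (i : ℕ) + 1 then 1 else 0)

/-- a = diag(1, α, α², …, α^{n-1}). -/
noncomputable def aMat (n : ℕ) : Matrix (Fin n) (Fin n) ℂ :=
  Matrix.diagonal (fun i => rootα n ^ (i : ℕ))

/-- e_{n1}, the matrix with 1 in the bottom-left corner. -/
def enone (n : ℕ) : Matrix (Fin n) (Fin n) ℂ :=
  Matrix.of (fun i j => if (i : ℕ) = n - 1 ∧ (j : ℕ) = 0 then 1 else 0)

/-- c_k = 1/(σ_1 ⋯ σ_k), with c_0 = 1. -/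
noncomputable def cCoef (n k : ℕ) : ℂ := (∏ m ∈ Finset.Icc 1 k, sigc n m)⁻¹

/-- φ_n(λ) = Σ_{i=0}^{n-1} c_i Λ^i λ^i. -/
noncomputable def phiMat (n : ℕ) (t : ℂ) : Matrix (Fin n) (Fin n) ℂ :=
  ∑ i ∈ Finset.range n, (cCoef n i * t ^ i) • Lam n ^ i

lemma alpha_prim (n : ℕ) (hn : 2 ≤ n) : IsPrimitiveRoot (rootα n) n :=
  Complex.isPrimitiveRoot_exp n (by omega)
lemma alpha_ne_one (n : ℕ) (hn : 2 ≤ n) : rootα n ≠ 1 :=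
  (alpha_prim n hn).ne_one (by omega)
lemma alpha_pow_n (n : ℕ) (hn : 2 ≤ n) : rootα n ^ n = 1 :=
  (alpha_prim n hn).pow_eq_one
lemma sigc_one (n : ℕ) (hn : 2 ≤ n) : sigc n 1 = 1 := by
  have h := sub_ne_zero.mpr (alpha_ne_one n hn).symm
  simp [sigc, div_self h]
lemma sigc_succ (n : ℕ) (hn : 2 ≤ n) (k : ℕ) :
    sigc n (k + 1) = rootα n * sigc n k + 1 := by
  have h := sub_ne_zero.mpr (alpha_ne_one n hn).symm
  unfold sigc
  field_simp
  ring
lemma aLam (n : ℕ) : aMat n * Lam n = rootα n • (Lam n * aMat n) := by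
  ext i j
  simp only [aMat, Matrix.diagonal_mul, Matrix.mul_diagonal, Matrix.smul_apply, Lam,
    Matrix.of_apply, smul_eq_mul]
  split_ifs with h
  · rw [h]; ring
  · ring

lemma bmul (n : ℕ) (i j : Fin n) :
    (bMat n * Lam n) i j =
      if (i : ℕ) = (j : ℕ) ∧ (i : ℕ) + 1 < n then sigc n ((i : ℕ) + 1) else 0 := by
  rw [Matrix.mul_apply]
  split_ifs with h
  · obtain ⟨hij, hi⟩ := h
    rw [Finset.sum_eq_single (⟨(i : ℕ) + 1, hi⟩ : Fin n)]
    · simp [bMat, Lam, hij]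
    · intro m _ hm
      have hmm : (m : ℕ) ≠ (i : ℕ) + 1 := fun hc => hm (Fin.ext (by simp [hc]))
      simp [bMat, hmm]
    · simp
  · apply Finset.sum_eq_zero
    intro m _
    simp only [bMat, Lam, Matrix.of_apply]
    rcases eq_or_ne ((m : ℕ)) ((i : ℕ) + 1) with hmm | hmm
    · rcases eq_or_ne ((m : ℕ)) ((j : ℕ) + 1) with hmj | hmj
      · exact absurd ⟨by omega, by omega⟩ h
      · rw [if_pos hmm, if_neg (by omega), mul_zero]
    · simp [hmm]

lemma mulb (n : ℕ) (i j : Fin n) :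
    (Lam n * bMat n) i j =
      if (i : ℕ) = (j : ℕ) ∧ 1 ≤ (i : ℕ) then sigc n (i : ℕ) else 0 := by
  rw [Matrix.mul_apply]
  split_ifs with h
  · obtain ⟨hij, hi⟩ := h
    rw [Finset.sum_eq_single (⟨(i : ℕ) - 1, by omega⟩ : Fin n)]
    · simp only [Lam, bMat, Matrix.of_apply, Fin.val_mk]
      rw [if_pos (by omega), if_pos (by omega)]
      have : (i : ℕ) - 1 + 1 = (i : ℕ) := by omega
      rw [this, mul_one]
    · intro m _ hm
      have hmm : (i : ℕ) ≠ (m : ℕ) + 1 := fun hc =>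
        hm (Fin.ext (by simp only [Fin.val_mk]; omega))
      simp [Lam, hmm]
    · simp
  · apply Finset.sum_eq_zero
    intro m _
    simp only [Lam, bMat, Matrix.of_apply]
    rcases eq_or_ne ((i : ℕ)) ((m : ℕ) + 1) with hmm | hmm
    · rcases eq_or_ne ((j : ℕ)) ((m : ℕ) + 1) with hmj | hmj
      · exact absurd ⟨by omega, by omega⟩ h
      · simp [hmm, hmj]
    · simp [hmm]

lemma base (n : ℕ) (hn : 2 ≤ n) :
    bMat n * Lam n - Lam n * bMat n = aMat n := by
  have hne := sub_ne_zero.mpr (alpha_ne_one n hn).symm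
  ext i j
  rw [Matrix.sub_apply, bmul, mulb]
  rcases eq_or_ne i j with rfl | hij
  · rw [aMat, Matrix.diagonal_apply_eq]
    rcases Nat.lt_or_ge ((i : ℕ) + 1) n with hi | hi
    · rcases Nat.eq_zero_or_pos (i : ℕ) with h0 | h0
      · rw [if_pos ⟨rfl, hi⟩, if_neg (by omega), h0, sigc_one n hn]
        simp
      · rw [if_pos ⟨rfl, hi⟩, if_pos ⟨rfl, h0⟩]
        unfold sigc
        field_simp
        ring
    · rw [if_neg (by omega), if_pos ⟨rfl, by omega⟩, zero_sub]
      have hpow : rootα n * rootα n ^ (i : ℕ) = 1 := by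
        have h1 : (i : ℕ) + 1 = n := by omega
        calc rootα n * rootα n ^ (i : ℕ) = rootα n ^ ((i : ℕ) + 1) := by ring
        _ = 1 := by rw [h1, alpha_pow_n n hn]
      have hs : sigc n (i : ℕ) = -(rootα n ^ (i : ℕ)) := by
        rw [sigc, div_eq_iff hne]
        linear_combination -hpow
      rw [hs, neg_neg]
  · have h' : (i : ℕ) ≠ (j : ℕ) := fun h => hij (Fin.ext h)
    rw [aMat, Matrix.diagonal_apply_ne _ hij, if_neg (by tauto), if_neg (by tauto), sub_zero]

theorem stmt2 (n : ℕ) (hn : 2 ≤ n) (k : ℕ) (hk : 1 ≤ k) :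
    bMat n * Lam n ^ k - Lam n ^ k * bMat n = sigc n k • (Lam n ^ (k - 1) * aMat n) := by
  induction k with
  | zero => omega
  | succ k ih =>
    rcases Nat.eq_zero_or_pos k with rfl | hk'
    · simp [pow_one, base n hn, sigc_one n hn]
    · have ih' := ih hk'
      have hstep : bMat n * Lam n ^ (k + 1) - Lam n ^ (k + 1) * bMat n =
          (bMat n * Lam n ^ k - Lam n ^ k * bMat n) * Lam n +
            Lam n ^ k * (bMat n * Lam n - Lam n * bMat n) := by
        rw [pow_succ]
        noncomm_ring
      rw [hstep, ih', base n hn, sigc_succ n hn k]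
      have hkk : k - 1 + 1 = k := by omega
      have h1 : Lam n ^ (k - 1) * aMat n * Lam n = rootα n • (Lam n ^ k * aMat n) := by
        rw [mul_assoc, aLam, Matrix.mul_smul, ← mul_assoc, ← pow_succ, hkk]
      rw [Matrix.smul_mul, h1]
      simp only [Nat.add_sub_cancel]
      rw [smul_smul, add_smul, one_smul, mul_comm]

end
end

section
/- For 1 ≤ k ≤ n-1, the k-th power of Λ is given explicitly by Λ^k = (1-α)^{-k} Σ_{j=k+1}^{n} (1-α^{j-1})(1-α^{j-2})⋯(1-α^{j-k}) e_{j,j-k}. -/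
open Matrix Finset

noncomputable section

theorem lam_pow_key (n : ℕ) (k : ℕ) (hk1 : 1 ≤ k) (i j : Fin n) :
    (Lam n ^ k) i j =
      if (i : ℕ) = (j : ℕ) + k then
        (∏ m ∈ Finset.range k, (1 - rootα n ^ ((i : ℕ) - m))) / (1 - rootα n) ^ k
      else 0 := by
  induction k, hk1 using Nat.le_induction generalizing i j with
  | base =>
    simp only [pow_one, Lam, of_apply, sigc]
    split
    · next h => simp [h]
    · rfl
  | succ k hk ih =>
    rw [pow_succ, Matrix.mul_apply]
    by_cases h : (j : ℕ) + 1 < n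
    · set l0 : Fin n := ⟨(j : ℕ) + 1, h⟩ with hl0
      rw [Finset.sum_eq_single l0]
      · have hLam : Lam n l0 j = sigc n ((j : ℕ) + 1) := by simp [Lam, hl0]
        rw [hLam, ih]
        by_cases hij : (i : ℕ) = (j : ℕ) + (k + 1)
        · have h1 : (i : ℕ) = (l0 : ℕ) + k := by simp [hl0]; omega
          rw [if_pos h1, if_pos hij]
          rw [Finset.prod_range_succ]
          have hik : (i : ℕ) - k = (j : ℕ) + 1 := by omega
          rw [hik, sigc, div_mul_div_comm, ← pow_succ]
        · have h1 : (i : ℕ) ≠ (l0 : ℕ) + k := by simp [hl0]; omega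
          rw [if_neg h1, if_neg hij, zero_mul]
      · intro b _ hb
        have : (b : ℕ) ≠ (j : ℕ) + 1 := fun hc => hb (Fin.ext hc)
        simp [Lam, this]
      · intro hc; exact absurd (Finset.mem_univ l0) hc
    · have hij : (i : ℕ) ≠ (j : ℕ) + (k + 1) := by omega
      rw [if_neg hij]
      apply Finset.sum_eq_zero
      intro b _
      have : (b : ℕ) ≠ (j : ℕ) + 1 := by omega
      simp [Lam, this]

theorem stmt4 (n : ℕ) (hn : 2 ≤ n) (k : ℕ) (hk1 : 1 ≤ k) (hk2 : k ≤ n - 1) (i j : Fin n) :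
    (Lam n ^ k) i j =
      if (i : ℕ) = (j : ℕ) + k then
        (∏ m ∈ Finset.range k, (1 - rootα n ^ ((i : ℕ) - m))) / (1 - rootα n) ^ k
      else 0 := by
  exact lam_pow_key n k hk1 i j

end
end

section
/- Let φ_n(λ) = Σ_{i=0}^{n-1} c_i Λ^i λ^i where c_0 = 1 and c_k = 1/(σ_1 σ_2 ⋯ σ_k), with σ_k = (1-α^k)/(1-α) and Λ as above. Then φ_n(λ)^{-1} (e_{n1}λ^n + b) φ_n(λ) = aλ + b for all λ ∈ ℂ (where φ_n(λ) is invertible since it is unipotent lower triangular). -/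
open Matrix Finset

noncomputable section

variable {n : ℕ} (hn : 2 ≤ n)

lemma rootα_prim (hn : 2 ≤ n) : IsPrimitiveRoot (rootα n) n := by
  have := Complex.isPrimitiveRoot_exp n (by omega)
  rwa [rootα]

lemma rootα_pow_n (hn : 2 ≤ n) : rootα n ^ n = 1 := (rootα_prim hn).pow_eq_one

lemma rootα_pow_ne_one (hn : 2 ≤ n) {m : ℕ} (h1 : 1 ≤ m) (h2 : m ≤ n - 1) :
    rootα n ^ m ≠ 1 :=
  (rootα_prim hn).pow_ne_one_of_pos_of_lt (by omega) (by omega)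

lemma one_sub_rootα_ne (hn : 2 ≤ n) : (1 : ℂ) - rootα n ≠ 0 := by
  have := rootα_pow_ne_one hn (m := 1) le_rfl (by omega)
  rw [pow_one] at this
  exact sub_ne_zero.mpr (Ne.symm this)

lemma sigc_ne_zero (hn : 2 ≤ n) {m : ℕ} (h1 : 1 ≤ m) (h2 : m ≤ n - 1) :
    sigc n m ≠ 0 := by
  have h := rootα_pow_ne_one hn h1 h2
  have : (1 : ℂ) - rootα n ^ m ≠ 0 := sub_ne_zero.mpr (Ne.symm h)
  exact div_ne_zero this (one_sub_rootα_ne hn)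

lemma sig_add (hn : 2 ≤ n) (p q : ℕ) :
    sigc n (p + q) = rootα n ^ p * sigc n q + sigc n p := by
  have h := one_sub_rootα_ne hn
  simp only [sigc, pow_add]
  field_simp
  ring

lemma sig_n (hn : 2 ≤ n) : sigc n n = 0 := by
  simp [sigc, rootα_pow_n hn]

lemma cCoef_eq (n k : ℕ) : cCoef n k = (∏ j ∈ Finset.range k, sigc n (1 + j))⁻¹ := by
  rw [cCoef]
  congr 1
  rw [show Finset.Icc 1 k = Finset.Ico 1 (k+1) by rfl, Finset.prod_Ico_eq_prod_range]
  simp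

lemma cCoef_succ (n k : ℕ) :
    cCoef n (k + 1) = cCoef n k * (sigc n (k + 1))⁻¹ := by
  rw [cCoef_eq, cCoef_eq, Finset.prod_range_succ, mul_inv]
  ring_nf

lemma Lam_pow_apply (n i : ℕ) (p q : Fin n) :
    (Lam n ^ i) p q = if (p : ℕ) = (q : ℕ) + i then
      ∏ j ∈ Finset.range i, sigc n ((q : ℕ) + 1 + j) else 0 := by
  induction i generalizing q with
  | zero =>
    simp [Matrix.one_apply, Fin.ext_iff]
  | succ i ih =>
    rw [pow_succ, Matrix.mul_apply]
    by_cases hq : (q : ℕ) + 1 < n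
    · rw [Finset.sum_eq_single (⟨(q : ℕ) + 1, hq⟩ : Fin n)]
      · rw [ih]
        simp only [Lam, Matrix.of_apply, Fin.val_mk]
        by_cases hp : (p : ℕ) = (q : ℕ) + (i + 1)
        · rw [if_pos (by omega : (p:ℕ) = (q:ℕ)+1+i)]
          simp only [if_true]
          rw [if_pos hp, Finset.prod_range_succ', add_zero]
          congr 1
          apply Finset.prod_congr rfl; intro x _; congr 1; omega
        · rw [if_neg (by omega), if_neg hp, zero_mul]
      · intro m _ hm
        simp only [Lam, Matrix.of_apply]
        rw [if_neg (fun hc => hm (Fin.ext (by simpa using hc))), mul_zero]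
      · intro h; exact absurd (Finset.mem_univ _) h
    · have hq' : (q : ℕ) = n - 1 := by omega
      rw [if_neg (by omega)]
      apply Finset.sum_eq_zero
      intro m _
      simp only [Lam, Matrix.of_apply]
      rw [if_neg (by omega), mul_zero]

def fEnt (n : ℕ) (t : ℂ) (p q : ℕ) : ℂ :=
  if q ≤ p then cCoef n (p - q) * t ^ (p - q) * ∏ j ∈ Finset.range (p - q), sigc n (q + 1 + j)
  else 0

lemma phi_apply (n : ℕ) (t : ℂ) (p q : Fin n) :
    phiMat n t p q = fEnt n t (p : ℕ) (q : ℕ) := by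
  rw [phiMat]
  rw [Matrix.sum_apply]
  simp only [Matrix.smul_apply, Lam_pow_apply, smul_eq_mul]
  by_cases h : (q : ℕ) ≤ (p : ℕ)
  · rw [Finset.sum_eq_single ((p : ℕ) - (q : ℕ))]
    · rw [if_pos (by omega), fEnt, if_pos h]
    · intro m _ hm
      rw [if_neg (by omega), mul_zero]
    · intro hmem
      exact absurd (Finset.mem_range.mpr (by omega)) hmem
  · rw [fEnt, if_neg h]
    apply Finset.sum_eq_zero
    intro m _
    rw [if_neg (by omega), mul_zero]


lemma cCoef_zero (n : ℕ) : cCoef n 0 = 1 := by simp [cCoef]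

lemma key_entry (hn : 2 ≤ n) (t : ℂ) {i k : ℕ} (hi : i < n) (hk : k < n) :
    t ^ n * (if i = n - 1 ∧ k = 0 then 1 else 0) + (if i + 1 < n then fEnt n t (i+1) k else 0)
    = t * (fEnt n t i k * rootα n ^ k) + (if 1 ≤ k then fEnt n t i (k-1) else 0) := by
  by_cases hk0 : k = 0
  · subst hk0
    rw [if_neg (by omega : ¬(1 ≤ 0)), add_zero, pow_zero, mul_one]
    by_cases hin : i + 1 < n
    · rw [if_pos hin, if_neg (show ¬(i = n - 1 ∧ 0 = 0) by omega), mul_zero, zero_add]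
      have hs : sigc n (i+1) ≠ 0 := sigc_ne_zero hn (by omega) (by omega)
      simp only [fEnt, if_pos (Nat.zero_le _), Nat.sub_zero, Nat.zero_add]
      rw [cCoef_succ, Finset.prod_range_succ, pow_succ, show 1+i = i+1 from by omega]
      linear_combination (cCoef n i * t^i * t * (∏ x ∈ Finset.range i, sigc n (1 + x))) *
        mul_inv_cancel₀ hs
    · rw [if_neg hin, if_pos (show i = n - 1 ∧ 0 = 0 by omega), add_zero, mul_one]
      simp only [fEnt, if_pos (Nat.zero_le _), Nat.sub_zero, Nat.zero_add]
      have hP : (∏ j ∈ Finset.range i, sigc n (1 + j)) ≠ 0 := by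
        apply Finset.prod_ne_zero_iff.mpr
        intro j hj
        exact sigc_ne_zero hn (by omega) (by simp at hj; omega)
      have hni : n = i + 1 := by omega
      have ht : t ^ n = t ^ i * t := by rw [hni, pow_succ]
      rw [cCoef_eq, ht]
      linear_combination (-(t^i*t)) * mul_inv_cancel₀ hP
  · -- k ≥ 1
    rw [if_neg (show ¬(i = n - 1 ∧ k = 0) by omega), mul_zero, zero_add,
      if_pos (show 1 ≤ k by omega)]
    by_cases hki : k ≤ i
    · obtain ⟨d, rfl⟩ : ∃ d, i = k + d := ⟨i - k, by omega⟩
      have e2 : fEnt n t (k+d) k =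
          cCoef n d * t ^ d * ∏ j ∈ Finset.range d, sigc n (k+1+j) := by
        simp [fEnt, show k + d - k = d by omega]
      have e3 : fEnt n t (k+d) (k-1) =
          cCoef n (d+1) * t ^ (d+1) * ∏ j ∈ Finset.range (d+1), sigc n (k+j) := by
        simp only [fEnt, if_pos (by omega : k - 1 ≤ k + d),
          show k + d - (k-1) = d + 1 by omega, show k - 1 + 1 = k by omega]
      have hσ := sig_add hn k (d+1)
      have hprod : (∏ j ∈ Finset.range d, sigc n (k+(j+1)))
          = ∏ j ∈ Finset.range d, sigc n (k+1+j) := by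
        apply Finset.prod_congr rfl; intro x _; congr 1; omega
      have hs : sigc n (d+1) ≠ 0 := sigc_ne_zero hn (by omega) (by omega)
      by_cases hin : k + d + 1 < n
      · rw [if_pos hin]
        have e1 : fEnt n t (k+d+1) k =
            cCoef n (d+1) * t ^ (d+1) * ∏ j ∈ Finset.range (d+1), sigc n (k+1+j) := by
          simp [fEnt, show k + d + 1 - k = d + 1 by omega, show k ≤ k + d + 1 by omega]
        rw [e1, e2, e3, Finset.prod_range_succ, Finset.prod_range_succ', add_zero,
          cCoef_succ, show k+1+d = k+(d+1) by omega, hprod]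
        linear_combination (cCoef n d * (sigc n (d+1))⁻¹ * t^(d+1) *
            (∏ j ∈ Finset.range d, sigc n (k+1+j))) * hσ +
          (cCoef n d * t^(d+1) * (∏ j ∈ Finset.range d, sigc n (k+1+j)) * rootα n ^ k) *
            mul_inv_cancel₀ hs
      · rw [if_neg hin]
        have hkd : k + (d + 1) = n := by omega
        have h0 : rootα n ^ k * sigc n (d+1) + sigc n k = 0 := by
          rw [← sig_add hn k (d+1), hkd, sig_n hn]
        rw [e2, e3, Finset.prod_range_succ', add_zero, cCoef_succ, hprod]
        linear_combination (-(cCoef n d * (sigc n (d+1))⁻¹ * t^(d+1) *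
            (∏ j ∈ Finset.range d, sigc n (k+1+j)))) * h0 +
          (cCoef n d * t^(d+1) * (∏ j ∈ Finset.range d, sigc n (k+1+j)) * rootα n ^ k) *
            mul_inv_cancel₀ hs
    · -- k > i
      have hz2 : fEnt n t i k = 0 := by rw [fEnt, if_neg (by omega)]
      by_cases hk1 : k = i + 1
      · subst hk1
        rw [if_pos hk, hz2, zero_mul, mul_zero, zero_add]
        simp [fEnt, cCoef_zero]
      · have hz1 : fEnt n t (i+1) k = 0 := by rw [fEnt, if_neg (by omega)]
        have hz3 : fEnt n t i (k-1) = 0 := by rw [fEnt, if_neg (by omega)]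
        rw [hz2, hz3, zero_mul, mul_zero, add_zero]
        split_ifs with h
        · exact hz1
        · rfl

end
section
variable {n : ℕ}

lemma enone_mul_phi (hn : 2 ≤ n) (t : ℂ) (i k : Fin n) :
    (enone n * phiMat n t) i k = if (i : ℕ) = n - 1 ∧ (k : ℕ) = 0 then 1 else 0 := by
  rw [Matrix.mul_apply]
  rw [Finset.sum_eq_single (⟨0, by omega⟩ : Fin n)]
  · rw [phi_apply]
    simp only [enone, Matrix.of_apply, Fin.val_mk, fEnt]
    by_cases hk : (k : ℕ) = 0
    · simp [hk, cCoef_zero]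
    · rw [if_neg (by omega : ¬(k:ℕ) ≤ 0), mul_zero,
        if_neg (fun hc => hk hc.2)]
  · intro m _ hm
    simp only [enone, Matrix.of_apply]
    rw [if_neg (fun hc => hm (Fin.ext (by simp only [Fin.val_mk]; omega))), zero_mul]
  · intro h; exact absurd (Finset.mem_univ _) h

lemma b_mul_phi (hn : 2 ≤ n) (t : ℂ) (i k : Fin n) :
    (bMat n * phiMat n t) i k =
      if (i : ℕ) + 1 < n then fEnt n t ((i : ℕ) + 1) (k : ℕ) else 0 := by
  rw [Matrix.mul_apply]
  by_cases h : (i : ℕ) + 1 < n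
  · rw [if_pos h, Finset.sum_eq_single (⟨(i : ℕ) + 1, h⟩ : Fin n)]
    · rw [phi_apply]
      simp [bMat]
    · intro m _ hm
      simp only [bMat, Matrix.of_apply]
      rw [if_neg (fun hc => hm (Fin.ext (by simp only [Fin.val_mk]; omega))), zero_mul]
    · intro h; exact absurd (Finset.mem_univ _) h
  · rw [if_neg h]
    apply Finset.sum_eq_zero
    intro m _
    simp only [bMat, Matrix.of_apply]
    rw [if_neg (by omega), zero_mul]

lemma phi_mul_a (hn : 2 ≤ n) (t : ℂ) (i k : Fin n) :
    (phiMat n t * aMat n) i k =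
      (if (k : ℕ) = (k : ℕ) then fEnt n t (i : ℕ) (k : ℕ) * rootα n ^ (k : ℕ) else 0) := by
  rw [aMat, Matrix.mul_diagonal, phi_apply, if_pos rfl]

lemma phi_mul_b (hn : 2 ≤ n) (t : ℂ) (i k : Fin n) :
    (phiMat n t * bMat n) i k =
      if 1 ≤ (k : ℕ) then fEnt n t (i : ℕ) ((k : ℕ) - 1) else 0 := by
  rw [Matrix.mul_apply]
  by_cases h : 1 ≤ (k : ℕ)
  · rw [if_pos h, Finset.sum_eq_single (⟨(k : ℕ) - 1, by omega⟩ : Fin n)]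
    · rw [phi_apply]
      simp only [bMat, Matrix.of_apply, Fin.val_mk]
      rw [if_pos (by omega), mul_one]
    · intro m _ hm
      simp only [bMat, Matrix.of_apply]
      rw [if_neg (fun hc => hm (Fin.ext (by simp only [Fin.val_mk]; omega))), mul_zero]
    · intro h; exact absurd (Finset.mem_univ _) h
  · rw [if_neg h]
    apply Finset.sum_eq_zero
    intro m _
    simp only [bMat, Matrix.of_apply]
    rw [if_neg (by omega), mul_zero]

lemma key_mat (hn : 2 ≤ n) (t : ℂ) :
    (t ^ n • enone n + bMat n) * phiMat n t = phiMat n t * (t • aMat n + bMat n) := by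
  ext i k
  rw [Matrix.add_mul, Matrix.mul_add, Matrix.smul_mul, Matrix.mul_smul,
    Matrix.add_apply, Matrix.add_apply, Matrix.smul_apply, Matrix.smul_apply,
    smul_eq_mul, smul_eq_mul, enone_mul_phi hn, b_mul_phi hn, phi_mul_a hn, phi_mul_b hn,
    if_pos rfl]
  exact key_entry hn t i.isLt k.isLt

lemma phi_det (hn : 2 ≤ n) (t : ℂ) : (phiMat n t).det = 1 := by
  have htri : (phiMat n t).BlockTriangular OrderDual.toDual := by
    intro p q hpq
    rw [phi_apply, fEnt, if_neg (by exact fun hc => absurd (Fin.le_def.mpr hc) (not_le.mpr hpq))]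
  rw [Matrix.det_of_lowerTriangular _ htri]
  apply Finset.prod_eq_one
  intro p _
  rw [phi_apply, fEnt, if_pos le_rfl]
  simp [cCoef_zero]

theorem stmt6 (n : ℕ) (hn : 2 ≤ n) (t : ℂ) :
    IsUnit (phiMat n t) ∧
    (phiMat n t)⁻¹ * (t ^ n • enone n + bMat n) * phiMat n t = t • aMat n + bMat n := by
  have hdet : IsUnit (phiMat n t).det := by rw [phi_det hn]; exact isUnit_one
  refine ⟨(Matrix.isUnit_iff_isUnit_det _).mpr hdet, ?_⟩
  rw [mul_assoc, key_mat hn, ← mul_assoc, Matrix.nonsing_inv_mul _ hdet, one_mul]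

end
end

section
/- Let a = diag(1, α, …, α^{n-1}) with α = e^{2πi/n} and b = e_{12} + ⋯ + e_{n-1,n}. Then (aλ + b)^n = λ^n I for every λ ∈ ℂ. -/
open Matrix Finset

noncomputable section

open Polynomial in
lemma aux_prod_prim (n : ℕ) (hn : 0 < n) (ζ : ℂ) (hprim : IsPrimitiveRoot ζ n) :
    ∏ i ∈ range n, (X - C (ζ ^ i)) = X ^ n - 1 := by
  have himg : (range n).image (ζ ^ ·) = Polynomial.nthRootsFinset n (1 : ℂ) := by
    apply Finset.eq_of_subset_of_card_le
    · intro x hx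
      obtain ⟨i, _, rfl⟩ := Finset.mem_image.mp hx
      rw [Polynomial.mem_nthRootsFinset hn]
      rw [← pow_mul, mul_comm, pow_mul, hprim.pow_eq_one, one_pow]
    · rw [hprim.card_nthRootsFinset, Finset.card_image_of_injOn hprim.injOn_pow,
        Finset.card_range]
  rw [Polynomial.X_pow_sub_one_eq_prod hn hprim, ← himg,
    Finset.prod_image (fun i hi j hj h => hprim.injOn_pow hi hj h)]

open Polynomial in
lemma aux_bpow (n : ℕ) (hn : 0 < n) : bMat n ^ n = 0 := by
  have ht : (bMat n).BlockTriangular id := by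
    intro i j h
    have hij : (j : ℕ) < (i : ℕ) := h
    simp only [bMat, of_apply, ite_eq_right_iff]
    intro hj; omega
  have hcp : (bMat n).charpoly = X ^ n := by
    rw [Matrix.charpoly_of_upperTriangular _ ht]
    have h0 : ∀ i : Fin n, bMat n i i = 0 := by intro i; simp [bMat]
    simp [h0]
  have h := Matrix.aeval_self_charpoly (bMat n)
  rw [hcp] at h
  simpa using h

open Polynomial in
lemma aux_key (n : ℕ) (hn : 0 < n) : (aMat n + bMat n) ^ n = 1 := by
  set M := aMat n + bMat n with hM
  have ht : M.BlockTriangular id := by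
    intro i j h
    have hij : (j : ℕ) < (i : ℕ) := h
    simp only [hM, Matrix.add_apply, aMat, bMat, diagonal_apply, of_apply]
    rw [if_neg, if_neg]
    · ring
    · omega
    · exact fun hij' => absurd (congrArg Fin.val hij') (by omega)
  have hdiag : ∀ i : Fin n, M i i = rootα n ^ (i : ℕ) := by
    intro i; simp [hM, aMat, bMat]
  have hprim : IsPrimitiveRoot (rootα n) n := by
    simpa [rootα] using Complex.isPrimitiveRoot_exp n hn.ne'
  have hcp : M.charpoly = X ^ n - 1 := by
    rw [Matrix.charpoly_of_upperTriangular _ ht]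
    simp only [hdiag]
    rw [Fin.prod_univ_eq_prod_range (fun i => X - C (rootα n ^ i))]
    exact aux_prod_prim n hn _ hprim
  have h := Matrix.aeval_self_charpoly M
  rw [hcp] at h
  simp only [map_sub, map_pow, aeval_X, _root_.map_one, sub_eq_zero] at h
  exact h

lemma aux_conj_pow {n : ℕ} (D E X : Matrix (Fin n) (Fin n) ℂ) (hED : E * D = 1)
    (k : ℕ) (hk : 0 < k) : (D * X * E) ^ k = D * X ^ k * E := by
  induction k with
  | zero => omega
  | succ k ih =>
    rcases Nat.eq_zero_or_pos k with rfl | hk'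
    · simp
    · rw [pow_succ, ih hk', pow_succ]
      calc D * X ^ k * E * (D * X * E) = D * X ^ k * (E * D) * X * E := by
            noncomm_ring
        _ = D * (X ^ k * X) * E := by rw [hED]; noncomm_ring

theorem stmt10 (n : ℕ) (hn : 2 ≤ n) (t : ℂ) :
    (t • aMat n + bMat n) ^ n = t ^ n • (1 : Matrix (Fin n) (Fin n) ℂ) := by
  have hn0 : 0 < n := by omega
  rcases eq_or_ne t 0 with rfl | htne
  · rw [zero_smul, zero_add, aux_bpow n hn0, zero_pow hn0.ne', zero_smul]
  · set D : Matrix (Fin n) (Fin n) ℂ := Matrix.diagonal (fun i => t ^ (i : ℕ)) with hD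
    set E : Matrix (Fin n) (Fin n) ℂ := Matrix.diagonal (fun i => (t ^ (i : ℕ))⁻¹) with hE
    have hED : E * D = 1 := by
      rw [hE, hD, Matrix.diagonal_mul_diagonal]
      have h1 : (fun i : Fin n => (t ^ (i : ℕ))⁻¹ * t ^ (i : ℕ)) = fun _ => 1 :=
        funext fun i => inv_mul_cancel₀ (pow_ne_zero _ htne)
      rw [h1, Matrix.diagonal_one]
    have hDE : D * E = 1 := by
      rw [hD, hE, Matrix.diagonal_mul_diagonal]
      have h1 : (fun i : Fin n => t ^ (i : ℕ) * (t ^ (i : ℕ))⁻¹) = fun _ => 1 :=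
        funext fun i => mul_inv_cancel₀ (pow_ne_zero _ htne)
      rw [h1, Matrix.diagonal_one]
    have hconj : t • aMat n + bMat n = D * (t • (aMat n + bMat n)) * E := by
      ext i j
      rw [hD, hE, Matrix.mul_diagonal, Matrix.diagonal_mul]
      simp only [Matrix.smul_apply, Matrix.add_apply, aMat, bMat, Matrix.diagonal_apply,
        Matrix.of_apply, smul_eq_mul]
      by_cases hij : i = j
      · subst hij
        have hj1 : ¬ ((i : ℕ) = (i : ℕ) + 1) := by omega
        rw [if_neg hj1]
        field_simp
        simp
      · by_cases hj1 : (j : ℕ) = (i : ℕ) + 1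
        · simp only [if_pos hj1, hj1, if_neg hij]
          field_simp
          ring
        · simp [hj1, if_neg hij]
    rw [hconj, aux_conj_pow D E _ hED n hn0, smul_pow, aux_key n hn0,
      Matrix.mul_smul, Matrix.smul_mul, Matrix.mul_one, hDE]


end
end

section
/- For i, j ≥ 0 with i + j < n - 1, the matrix Λ^i b^{n-1} Λ^j equals d_{ij} e_{i+1, n-j} for some nonzero constant d_{ij} ∈ ℂ, and the set {Λ^i b^{n-1} Λ^j : i, j ≥ 0, i + j < n-1} is a basis of the space of strictly upper triangular n×n complex matrices. -/
open Matrix Finset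

noncomputable section

lemma sig_ne (n k : ℕ) (hn : 2 ≤ n) (hk1 : 1 ≤ k) (hk : k < n) : sigc n k ≠ 0 := by
  have hprim : IsPrimitiveRoot (rootα n) n := Complex.isPrimitiveRoot_exp n (by omega)
  have h1 : rootα n ≠ 1 := by
    have := hprim.pow_ne_one_of_pos_of_lt (l := 1) one_ne_zero (by omega)
    simpa using this
  have h2 : rootα n ^ k ≠ 1 := hprim.pow_ne_one_of_pos_of_lt (by omega) hk
  exact div_ne_zero (sub_ne_zero.2 fun h => h2 h.symm) (sub_ne_zero.2 fun h => h1 h.symm)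

lemma lam_mul_std {n : ℕ} (p q : Fin n) (hp : (p : ℕ) + 1 < n) (c : ℂ) :
    Lam n * Matrix.single p q c = Matrix.single ⟨(p : ℕ) + 1, hp⟩ q (sigc n ((p : ℕ) + 1) * c) := by
  ext i j
  rw [Matrix.mul_apply, Finset.sum_eq_single p]
  · simp only [Lam, Matrix.of_apply, Matrix.single, Fin.ext_iff]
    by_cases h1 : (i : ℕ) = (p : ℕ) + 1 <;> by_cases h2 : q = j <;>
      simp [h1, h2, eq_comm] <;> omega
  · intro r _ hr
    have : p ≠ r := fun h => hr h.symm
    simp [Matrix.single, this]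
  · simp

lemma std_mul_lam {n : ℕ} (p q : Fin n) (hq : 1 ≤ (q : ℕ)) (c : ℂ) :
    Matrix.single p q c * Lam n =
      Matrix.single p ⟨(q : ℕ) - 1, by omega⟩ (c * sigc n (q : ℕ)) := by
  ext i j
  rw [Matrix.mul_apply, Finset.sum_eq_single q]
  · have hq' : (q : ℕ) - 1 + 1 = (q : ℕ) := by omega
    simp only [Lam, Matrix.of_apply, Matrix.single, Fin.ext_iff]
    by_cases h1 : p = i <;> by_cases h2 : (j : ℕ) = (q : ℕ) - 1 <;>
      simp [h1, h2, hq', eq_comm] <;> first | omega | (rw [if_neg (by omega)])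
  · intro r _ hr
    simp [Matrix.single, hr.symm]
  · simp

lemma bpow_apply {n : ℕ} (k : ℕ) (p q : Fin n) :
    (bMat n ^ k) p q = if (q : ℕ) = (p : ℕ) + k then 1 else 0 := by
  induction k generalizing q with
  | zero => simp [Matrix.one_apply, Fin.ext_iff, eq_comm]
  | succ k ih =>
    rw [pow_succ, Matrix.mul_apply]
    by_cases h : (p : ℕ) + k < n
    · rw [Finset.sum_eq_single (⟨(p : ℕ) + k, h⟩ : Fin n)]
      · rw [ih]
        simp only [bMat, Matrix.of_apply]
        by_cases h2 : (q : ℕ) = (p : ℕ) + (k + 1) <;> simp [h2] <;> omega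
      · intro r _ hr
        rw [ih, if_neg, zero_mul]
        simp [Fin.ext_iff] at hr
        omega
      · simp
    · rw [Finset.sum_eq_zero, if_neg (by omega)]
      intro r _
      rw [ih, if_neg (by omega), zero_mul]

lemma b_pow_eq {n : ℕ} (hn : 2 ≤ n) :
    bMat n ^ (n - 1) =
      Matrix.single (⟨0, by omega⟩ : Fin n) (⟨n - 1, by omega⟩ : Fin n) (1 : ℂ) := by
  ext p q
  rw [bpow_apply]
  simp only [Matrix.single, Matrix.of_apply, Fin.ext_iff, Fin.val_mk]
  have hq := q.isLt; have hp := p.isLt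
  by_cases h : (q : ℕ) = (p : ℕ) + (n - 1)
  · rw [if_pos h, if_pos (by omega)]
  · rw [if_neg h, if_neg (by omega)]

lemma lam_pow_mul_std {n : ℕ} (hn : 2 ≤ n) (i : ℕ) (hi : i < n) (q : Fin n) {c : ℂ}
    (hc : c ≠ 0) :
    ∃ d : ℂ, d ≠ 0 ∧
      Lam n ^ i * Matrix.single (⟨0, by omega⟩ : Fin n) q c =
        Matrix.single (⟨i, hi⟩ : Fin n) q d := by
  induction i with
  | zero => exact ⟨c, hc, by simp⟩
  | succ i ih =>
    obtain ⟨d, hd, hEq⟩ := ih (by omega)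
    refine ⟨sigc n (i + 1) * d, mul_ne_zero (sig_ne n (i + 1) hn (by omega) (by omega)) hd, ?_⟩
    rw [pow_succ', mul_assoc, hEq, lam_mul_std ⟨i, by omega⟩ q hi]

lemma std_mul_lam_pow {n : ℕ} (hn : 2 ≤ n) (j : ℕ) (hj : j ≤ n - 1) (p : Fin n) {c : ℂ}
    (hc : c ≠ 0) :
    ∃ d : ℂ, d ≠ 0 ∧
      Matrix.single p (⟨n - 1, by omega⟩ : Fin n) c * Lam n ^ j =
        Matrix.single p (⟨n - 1 - j, by omega⟩ : Fin n) d := by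
  induction j with
  | zero => exact ⟨c, hc, by simp⟩
  | succ j ih =>
    obtain ⟨d, hd, hEq⟩ := ih (by omega)
    refine ⟨d * sigc n (n - 1 - j), mul_ne_zero hd (sig_ne n (n - 1 - j) hn (by omega) (by omega)), ?_⟩
    rw [pow_succ, ← mul_assoc, hEq, std_mul_lam p ⟨n - 1 - j, by omega⟩ (by simp; omega)]
    congr 1

lemma keyProd {n : ℕ} (hn : 2 ≤ n) (i j : ℕ) (h : i + j < n - 1) :
    ∃ d : ℂ, d ≠ 0 ∧
      Lam n ^ i * bMat n ^ (n - 1) * Lam n ^ j =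
        Matrix.single (⟨i, by omega⟩ : Fin n) (⟨n - 1 - j, by omega⟩ : Fin n) d := by
  rw [b_pow_eq hn]
  obtain ⟨d1, hd1, h1⟩ :=
    lam_pow_mul_std hn i (by omega) (⟨n - 1, by omega⟩ : Fin n) (one_ne_zero (α := ℂ))
  rw [h1]
  obtain ⟨d2, hd2, h2⟩ := std_mul_lam_pow hn j (by omega) (⟨i, by omega⟩ : Fin n) hd1
  rw [h2]
  exact ⟨d2, hd2, rfl⟩

theorem stmt15 (n : ℕ) (hn : 2 ≤ n) :
    (∀ i j : ℕ, i + j < n - 1 →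
      ∃ d : ℂ, d ≠ 0 ∧
        Lam n ^ i * bMat n ^ (n - 1) * Lam n ^ j =
          d • Matrix.of (fun p q : Fin n =>
            if (p : ℕ) = i ∧ (q : ℕ) = n - 1 - j then (1 : ℂ) else 0)) ∧
    LinearIndependent ℂ (fun p : {p : ℕ × ℕ // p.1 + p.2 < n - 1} =>
      Lam n ^ p.1.1 * bMat n ^ (n - 1) * Lam n ^ p.1.2) ∧
    (Submodule.span ℂ (Set.range (fun p : {p : ℕ × ℕ // p.1 + p.2 < n - 1} =>
        Lam n ^ p.1.1 * bMat n ^ (n - 1) * Lam n ^ p.1.2)) :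
      Set (Matrix (Fin n) (Fin n) ℂ)) =
      {X : Matrix (Fin n) (Fin n) ℂ | ∀ p q : Fin n, (q : ℕ) ≤ (p : ℕ) → X p q = 0} := by
  have std_eq : ∀ (i j : ℕ) (hi : i < n) (hj : j < n) (d : ℂ),
      Matrix.single (⟨i, hi⟩ : Fin n) (⟨j, hj⟩ : Fin n) d =
        d • Matrix.of (fun p q : Fin n =>
          if (p : ℕ) = i ∧ (q : ℕ) = j then (1 : ℂ) else 0) := by
    intro i j hi hj d
    ext p q
    simp only [Matrix.single, Matrix.of_apply, Matrix.smul_apply, smul_eq_mul,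
      Fin.ext_iff, Fin.val_mk]
    by_cases h1 : (p : ℕ) = i <;> by_cases h2 : (q : ℕ) = j <;>
      simp [h1, h2, eq_comm] <;> intros <;> omega
  refine ⟨?_, ?_, ?_⟩
  · intro i j h
    obtain ⟨d, hd, hEq⟩ := keyProd hn i j h
    exact ⟨d, hd, by rw [hEq, std_eq]⟩
  · -- linear independence
    set f : {p : ℕ × ℕ // p.1 + p.2 < n - 1} → Fin n × Fin n := fun p =>
      (⟨p.1.1, by have := p.2; omega⟩, ⟨n - 1 - p.1.2, by have := p.2; omega⟩) with hf
    have hfinj : Function.Injective f := by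
      rintro ⟨⟨i, j⟩, hij⟩ ⟨⟨i', j'⟩, hij'⟩ hEq
      simp only [hf, Prod.ext_iff, Fin.ext_iff] at hEq
      simp only [Subtype.ext_iff, Prod.ext_iff]
      constructor
      · exact hEq.1
      · simp at hij hij'; omega
    have hu : LinearIndependent ℂ
        (fun p : {p : ℕ × ℕ // p.1 + p.2 < n - 1} =>
          Matrix.single (f p).1 (f p).2 (1 : ℂ)) := by
      have := (Matrix.stdBasis ℂ (Fin n) (Fin n)).linearIndependent.comp f hfinj
      convert this using 1
      funext p
      rw [Function.comp_apply, Matrix.stdBasis_eq_single]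
    set d : {p : ℕ × ℕ // p.1 + p.2 < n - 1} → ℂ := fun p =>
      Classical.choose (keyProd hn p.1.1 p.1.2 p.2) with hdDef
    have hd : ∀ p, d p ≠ 0 ∧ Lam n ^ p.1.1 * bMat n ^ (n - 1) * Lam n ^ p.1.2 =
        Matrix.single (f p).1 (f p).2 (d p) := fun p =>
      Classical.choose_spec (keyProd hn p.1.1 p.1.2 p.2)
    set w : {p : ℕ × ℕ // p.1 + p.2 < n - 1} → ℂˣ := fun p => Units.mk0 (d p) (hd p).1
    have := hu.units_smul w
    convert this using 1
    funext p
    show Lam n ^ p.1.1 * bMat n ^ (n - 1) * Lam n ^ p.1.2 =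
      w p • Matrix.single (f p).1 (f p).2 (1 : ℂ)
    rw [(hd p).2, Matrix.smul_single]
    norm_num [w]
  · -- span
    set v : {p : ℕ × ℕ // p.1 + p.2 < n - 1} → Matrix (Fin n) (Fin n) ℂ := fun p =>
      Lam n ^ p.1.1 * bMat n ^ (n - 1) * Lam n ^ p.1.2 with hv
    set S : Submodule ℂ (Matrix (Fin n) (Fin n) ℂ) :=
      { carrier := {X : Matrix (Fin n) (Fin n) ℂ | ∀ p q : Fin n, (q : ℕ) ≤ (p : ℕ) → X p q = 0}
        add_mem' := by
          intro a b ha hb p q h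
          simp [Matrix.add_apply, ha p q h, hb p q h]
        zero_mem' := by intro p q h; simp
        smul_mem' := by
          intro c a ha p q h
          simp [Matrix.smul_apply, ha p q h] } with hS
    have hspan : Submodule.span ℂ (Set.range v) = S := by
      apply le_antisymm
      · rw [Submodule.span_le]
        rintro _ ⟨⟨⟨i, j⟩, hij⟩, rfl⟩
        obtain ⟨dv, hdv, hEq⟩ := keyProd hn i j hij
        intro p q hpq
        simp only [hv]
        rw [hEq]
        simp only [Matrix.single, Matrix.of_apply, Fin.ext_iff, Fin.val_mk]
        rw [if_neg]
        rintro ⟨h1, h2⟩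
        omega
      · intro X hX
        rw [Matrix.matrix_eq_sum_single X]
        refine Submodule.sum_mem _ fun a _ => Submodule.sum_mem _ fun b _ => ?_
        by_cases hab : (b : ℕ) ≤ (a : ℕ)
        · rw [hX a b hab]
          simp only [Matrix.single_zero]
          exact Submodule.zero_mem _
        · push_neg at hab
          have hb := b.isLt
          have hcond : (a : ℕ) + (n - 1 - (b : ℕ)) < n - 1 := by omega
          obtain ⟨dv, hdv, hEq⟩ := keyProd hn (a : ℕ) (n - 1 - (b : ℕ)) hcond
          have hfa : (⟨(a : ℕ), by omega⟩ : Fin n) = a := rfl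
          have hfb : (⟨n - 1 - (n - 1 - (b : ℕ)), by omega⟩ : Fin n) = b :=
            Fin.ext (by simp; omega)
          rw [hfa, hfb] at hEq
          have : Matrix.single a b (X a b) = (X a b * dv⁻¹) • v ⟨((a : ℕ), n - 1 - (b : ℕ)), hcond⟩ := by
            rw [hv]
            simp only
            rw [hEq, Matrix.smul_single, smul_eq_mul, mul_assoc,
              inv_mul_cancel₀ hdv, mul_one]
          rw [this]
          exact Submodule.smul_mem _ _ (Submodule.subset_span ⟨_, rfl⟩)
    rw [hspan]
    rfl

end
end

section
/- Let G_{-j} ⊂ M_n(ℂ) be the space of matrices supported on the j-th subdiagonal (entries (i,k) with k - i = -j), and Tr_{-j}(ξ) = Tr(b^j ξ) the sum of subdiagonal entries. For 0 ≤ j ≤ n-2, the map ad(b): G_{-(j+1)} → G_{-j}, X ↦ [b, X], is injective and its image is exactly {ξ ∈ G_{-j} : Tr_{-j}(ξ) = 0}. -/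
/-!
Index the entries of a matrix on its `k`-th subdiagonal by their row. Since
`[b, X]_{p, p-j} = X_{p+1, p-j} - X_{p, p-j-1}`, the map `ad b` from the `(j+1)`-th to the
`j`-th subdiagonal becomes the forward difference `h ↦ (p ↦ h (p+1) - h p)` on sequences
vanishing outside the rows `j+1 ≤ p < n`. Such a difference determines `h` (as `h j = 0`), its
entries sum to `h n - h j = 0`, and conversely a sequence with vanishing total sum is the
difference of its partial sums, which vanish outside those rows; `Tr(b^j ξ)` is that total sum.
-/

open Matrix Finset

noncomputable section

section Subdiagonal

variable {n : ℕ} {R : Type*} [Zero R]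

def SupportedOnSubdiag (k : ℕ) (A : Matrix (Fin n) (Fin n) R) : Prop :=
  ∀ p q : Fin n, (p : ℕ) ≠ (q : ℕ) + k → A p q = 0

def subdiagSeq (k : ℕ) (A : Matrix (Fin n) (Fin n) R) (p : ℕ) : R :=
  if h : k ≤ p ∧ p < n then A ⟨p, h.2⟩ ⟨p - k, by omega⟩ else 0

def ofSubdiagSeq (k : ℕ) (h : ℕ → R) : Matrix (Fin n) (Fin n) R :=
  Matrix.of fun p q => if (p : ℕ) = (q : ℕ) + k then h p else 0

lemma subdiagSeq_eq_zero {k : ℕ} (A : Matrix (Fin n) (Fin n) R) {p : ℕ}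
    (hp : ¬(k ≤ p ∧ p < n)) : subdiagSeq k A p = 0 :=
  dif_neg hp

lemma SupportedOnSubdiag.ext {k : ℕ} {A B : Matrix (Fin n) (Fin n) R}
    (hA : SupportedOnSubdiag k A) (hB : SupportedOnSubdiag k B)
    (h : subdiagSeq k A = subdiagSeq k B) : A = B := by
  ext p q
  by_cases hpq : (p : ℕ) = (q : ℕ) + k
  · have hp : k ≤ (p : ℕ) ∧ (p : ℕ) < n := ⟨by omega, p.isLt⟩
    have hq : q = ⟨(p : ℕ) - k, by omega⟩ := Fin.ext (by simp only; omega)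
    have := congrFun h p
    simp only [subdiagSeq, dif_pos hp, Fin.eta] at this
    rwa [← hq] at this
  · rw [hA p q hpq, hB p q hpq]

lemma supportedOnSubdiag_ofSubdiagSeq (k : ℕ) (h : ℕ → R) :
    SupportedOnSubdiag k (ofSubdiagSeq (n := n) k h) := by
  intro p q hpq
  exact if_neg hpq

lemma subdiagSeq_ofSubdiagSeq {k : ℕ} {h : ℕ → R}
    (hh : ∀ p, ¬(k ≤ p ∧ p < n) → h p = 0) :
    subdiagSeq k (ofSubdiagSeq (n := n) k h) = h := by
  funext p
  by_cases hp : k ≤ p ∧ p < n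
  · simp [subdiagSeq, ofSubdiagSeq, hp, Nat.sub_add_cancel hp.1]
  · rw [subdiagSeq_eq_zero _ hp, hh p hp]

end Subdiagonal

section Shift

variable {n : ℕ}

lemma bMat_mul_apply (X : Matrix (Fin n) (Fin n) ℂ) (p q : Fin n) :
    (bMat n * X) p q = if h : (p : ℕ) + 1 < n then X ⟨(p : ℕ) + 1, h⟩ q else 0 := by
  simp only [mul_apply, bMat, of_apply, ite_mul, one_mul, zero_mul]
  split_ifs with h
  · have hk : ∀ k : Fin n, ((k : ℕ) = p + 1 ↔ k = ⟨(p : ℕ) + 1, h⟩) := fun k => by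
      rw [Fin.ext_iff]
    simp_rw [hk, Finset.sum_ite_eq', Finset.mem_univ, if_true]
  · exact Finset.sum_eq_zero fun k _ => if_neg (by omega)

lemma mul_bMat_apply (X : Matrix (Fin n) (Fin n) ℂ) (p q : Fin n) :
    (X * bMat n) p q = if h : 1 ≤ (q : ℕ) then X p ⟨(q : ℕ) - 1, by omega⟩ else 0 := by
  simp only [mul_apply, bMat, of_apply, mul_ite, mul_one, mul_zero]
  split_ifs with h
  · have hk : ∀ k : Fin n, ((q : ℕ) = k + 1 ↔ k = ⟨(q : ℕ) - 1, by omega⟩) := fun k => by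
      rw [Fin.ext_iff]; simp only; omega
    simp_rw [hk, Finset.sum_ite_eq', Finset.mem_univ, if_true]
  · exact Finset.sum_eq_zero fun k _ => if_neg (by omega)

lemma mul_bMat_pow_apply (ξ : Matrix (Fin n) (Fin n) ℂ) (j : ℕ) (p q : Fin n) :
    (ξ * bMat n ^ j) p q = if h : j ≤ (q : ℕ) then ξ p ⟨(q : ℕ) - j, by omega⟩ else 0 := by
  induction j generalizing q with
  | zero => simp
  | succ j ih =>
    rw [pow_succ, ← mul_assoc, mul_bMat_apply]
    by_cases hq : j + 1 ≤ (q : ℕ)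
    · simp [hq, ih, show j ≤ (q : ℕ) - 1 by omega, show 1 ≤ (q : ℕ) by omega, Nat.sub_sub,
        Nat.add_comm 1 j]
    · simp only [hq, dite_false, dite_eq_right_iff]
      intro hq1
      simp [ih, show ¬ j ≤ (q : ℕ) - 1 by omega]

lemma trace_bMat_pow_mul (ξ : Matrix (Fin n) (Fin n) ℂ) (j : ℕ) :
    trace (bMat n ^ j * ξ) = ∑ p ∈ range n, subdiagSeq j ξ p := by
  rw [trace_mul_comm, trace, ← Fin.sum_univ_eq_sum_range]
  refine Finset.sum_congr rfl fun p _ => ?_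
  simp [mul_bMat_pow_apply, subdiagSeq]

lemma commutator_bMat_apply (X : Matrix (Fin n) (Fin n) ℂ) (p q : Fin n) :
    (bMat n * X - X * bMat n) p q =
      (if h : (p : ℕ) + 1 < n then X ⟨(p : ℕ) + 1, h⟩ q else 0) -
        if h : 1 ≤ (q : ℕ) then X p ⟨(q : ℕ) - 1, by omega⟩ else 0 := by
  rw [Matrix.sub_apply, bMat_mul_apply, mul_bMat_apply]

lemma SupportedOnSubdiag.commutator_bMat {j : ℕ} {X : Matrix (Fin n) (Fin n) ℂ}
    (hX : SupportedOnSubdiag (j + 1) X) : SupportedOnSubdiag j (bMat n * X - X * bMat n) := by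
  intro p q hpq
  rw [commutator_bMat_apply]
  split_ifs with hp hq hq
  · rw [hX _ q (by simp only; omega), hX p _ (by simp only; omega), sub_zero]
  · rw [hX _ q (by simp only; omega), sub_zero]
  · rw [hX p _ (by simp only; omega), sub_zero]
  · rw [sub_zero]

lemma subdiagSeq_commutator_bMat (j : ℕ) (X : Matrix (Fin n) (Fin n) ℂ) (p : ℕ) :
    subdiagSeq j (bMat n * X - X * bMat n) p =
      subdiagSeq (j + 1) X (p + 1) - subdiagSeq (j + 1) X p := by
  by_cases hp : j ≤ p ∧ p < n
  · simp only [subdiagSeq, hp, and_self, dite_true, commutator_bMat_apply]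
    congr 1
    · simp [hp.1]
    · by_cases h : j + 1 ≤ p
      · simp [h, show 1 ≤ p - j by omega, Nat.sub_sub]
      · simp [h, show ¬ 1 ≤ p - j by omega]
  · rw [subdiagSeq_eq_zero _ hp, subdiagSeq_eq_zero _ (by omega), subdiagSeq_eq_zero _ (by omega),
      sub_zero]

lemma eq_of_commutator_bMat_eq {j : ℕ} {X Y : Matrix (Fin n) (Fin n) ℂ}
    (hX : SupportedOnSubdiag (j + 1) X) (hY : SupportedOnSubdiag (j + 1) Y)
    (h : bMat n * X - X * bMat n = bMat n * Y - Y * bMat n) : X = Y := by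
  refine hX.ext hY (funext fun p => ?_)
  induction p with
  | zero => rw [subdiagSeq_eq_zero X (by omega), subdiagSeq_eq_zero Y (by omega)]
  | succ p ih =>
    have hp := congrArg (subdiagSeq j · p) h
    simp only [subdiagSeq_commutator_bMat] at hp
    linear_combination hp + ih

lemma trace_bMat_pow_mul_commutator_bMat (j : ℕ) (X : Matrix (Fin n) (Fin n) ℂ) :
    trace (bMat n ^ j * (bMat n * X - X * bMat n)) = 0 := by
  rw [trace_bMat_pow_mul]
  simp only [subdiagSeq_commutator_bMat, Finset.sum_range_sub]
  rw [subdiagSeq_eq_zero X (by omega), subdiagSeq_eq_zero X (by omega), sub_zero]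

lemma exists_commutator_bMat_eq {j : ℕ} {ξ : Matrix (Fin n) (Fin n) ℂ}
    (hξ : SupportedOnSubdiag j ξ) (htr : trace (bMat n ^ j * ξ) = 0) :
    ∃ X, SupportedOnSubdiag (j + 1) X ∧ bMat n * X - X * bMat n = ξ := by
  set d := subdiagSeq j ξ
  have hd : ∀ i, ¬(j ≤ i ∧ i < n) → d i = 0 := fun i hi => subdiagSeq_eq_zero ξ hi
  have hpartial : ∀ p, ¬(j + 1 ≤ p ∧ p < n) → ∑ i ∈ range p, d i = 0 := by
    intro p hp
    rcases not_and_or.mp hp with hp | hp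
    · exact Finset.sum_eq_zero fun i hi => hd i (by simp only [Finset.mem_range] at hi; omega)
    · rw [trace_bMat_pow_mul] at htr
      rw [← htr]
      exact Finset.eventually_constant_sum (fun i hi => hd i (by omega)) (by omega)
  have hX := supportedOnSubdiag_ofSubdiagSeq (n := n) (j + 1) fun p => ∑ i ∈ range p, d i
  refine ⟨_, hX, hX.commutator_bMat.ext hξ (funext fun p => ?_)⟩
  rw [subdiagSeq_commutator_bMat, subdiagSeq_ofSubdiagSeq hpartial, Finset.sum_range_succ_sub_sum]

end Shift

theorem stmt16_general (n : ℕ) (j : ℕ) :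
    (∀ X Y : Matrix (Fin n) (Fin n) ℂ,
      (∀ p q : Fin n, (p : ℕ) ≠ (q : ℕ) + (j + 1) → X p q = 0) →
      (∀ p q : Fin n, (p : ℕ) ≠ (q : ℕ) + (j + 1) → Y p q = 0) →
      bMat n * X - X * bMat n = bMat n * Y - Y * bMat n → X = Y) ∧
    (∀ ξ : Matrix (Fin n) (Fin n) ℂ,
      ((∀ p q : Fin n, (p : ℕ) ≠ (q : ℕ) + j → ξ p q = 0) ∧
        Matrix.trace (bMat n ^ j * ξ) = 0) ↔
      ∃ X : Matrix (Fin n) (Fin n) ℂ,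
        (∀ p q : Fin n, (p : ℕ) ≠ (q : ℕ) + (j + 1) → X p q = 0) ∧
        bMat n * X - X * bMat n = ξ) := by
  refine ⟨fun X Y hX hY h => eq_of_commutator_bMat_eq hX hY h, fun ξ => ⟨?_, ?_⟩⟩
  · rintro ⟨hξ, htr⟩
    exact exists_commutator_bMat_eq hξ htr
  · rintro ⟨X, hX, rfl⟩
    exact ⟨SupportedOnSubdiag.commutator_bMat hX, trace_bMat_pow_mul_commutator_bMat j X⟩

theorem stmt16 (n : ℕ) (hn : 2 ≤ n) (j : ℕ) (hj : j ≤ n - 2) :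
    (∀ X Y : Matrix (Fin n) (Fin n) ℂ,
      (∀ p q : Fin n, (p : ℕ) ≠ (q : ℕ) + (j + 1) → X p q = 0) →
      (∀ p q : Fin n, (p : ℕ) ≠ (q : ℕ) + (j + 1) → Y p q = 0) →
      bMat n * X - X * bMat n = bMat n * Y - Y * bMat n → X = Y) ∧
    (∀ ξ : Matrix (Fin n) (Fin n) ℂ,
      ((∀ p q : Fin n, (p : ℕ) ≠ (q : ℕ) + j → ξ p q = 0) ∧
        Matrix.trace (bMat n ^ j * ξ) = 0) ↔
      ∃ X : Matrix (Fin n) (Fin n) ℂ,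
        (∀ p q : Fin n, (p : ℕ) ≠ (q : ℕ) + (j + 1) → X p q = 0) ∧
        bMat n * X - X * bMat n = ξ) :=
  stmt16_general n j
end
end

section
/- Let A be a (not necessarily commutative) ℂ-algebra with a derivation D, let C = Σ_{k=1}^{n-1} k·e_{k+1,k} ∈ M_n(ℂ), and define S: A → M_n(A) by S(σ) = Σ_{k=0}^{n-1} D^k(σ) C^k / k!. Then S is an algebra homomorphism: S is ℂ-linear, S(1) = I, and S(στ) = S(σ)S(τ) for all σ, τ ∈ A. Equivalently, the entries S(σ)_{ij} = binom(i-1, j-1) D^{i-j}(σ) for i ≥ j (and 0 for i < j) satisfy the multiplicativity via the Leibniz rule. -/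
open Matrix Finset

noncomputable section

section aux

variable {A : Type*} [Ring A] [Algebra ℂ A] (D : A →ₗ[ℂ] A)

lemma myIterZero (m : ℕ) : (⇑D)^[m] 0 = 0 := by
  induction m with
  | zero => rfl
  | succ m ih => rw [Function.iterate_succ_apply', ih, map_zero]

lemma myLeibniz (hD : ∀ x y : A, D (x * y) = D x * y + x * D y) (m : ℕ) (σ τ : A) :
    (⇑D)^[m] (σ * τ) =
      ∑ r ∈ range (m + 1), (m.choose r) • ((⇑D)^[r] σ * (⇑D)^[m - r] τ) := by
  induction m with
  | zero => simp
  | succ m ih =>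
    rw [Function.iterate_succ_apply', ih, map_sum]
    have hterm : ∀ r, D ((m.choose r) • ((⇑D)^[r] σ * (⇑D)^[m - r] τ))
        = (m.choose r) • ((⇑D)^[r + 1] σ * (⇑D)^[m - r] τ)
          + (m.choose r) • ((⇑D)^[r] σ * (⇑D)^[m - r + 1] τ) := by
      intro r
      rw [map_nsmul, hD, smul_add, ← Function.iterate_succ_apply' D r,
        ← Function.iterate_succ_apply' D (m - r)]
    simp only [hterm]
    rw [Finset.sum_add_distrib]
    have h1 : ∑ r ∈ range (m + 1), (m.choose r) • ((⇑D)^[r + 1] σ * (⇑D)^[m - r] τ)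
        = ∑ r ∈ range (m + 2), (if r = 0 then 0 else (m.choose (r - 1)) •
            ((⇑D)^[r] σ * (⇑D)^[m + 1 - r] τ)) := by
      rw [Finset.sum_range_succ' (fun r => if r = 0 then 0 else (m.choose (r - 1)) •
            ((⇑D)^[r] σ * (⇑D)^[m + 1 - r] τ)) (m + 1)]
      simp [Nat.succ_sub_succ]
    have h2 : ∑ r ∈ range (m + 1), (m.choose r) • ((⇑D)^[r] σ * (⇑D)^[m - r + 1] τ)
        = ∑ r ∈ range (m + 2), (if r = m + 1 then 0 else (m.choose r) •
            ((⇑D)^[r] σ * (⇑D)^[m + 1 - r] τ)) := by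
      rw [Finset.sum_range_succ (fun r => if r = m + 1 then 0 else (m.choose r) •
            ((⇑D)^[r] σ * (⇑D)^[m + 1 - r] τ)) (m + 1)]
      simp only [if_pos, ite_true, add_zero]
      apply Finset.sum_congr rfl
      intro r hr
      simp only [Finset.mem_range] at hr
      have hh : m - r + 1 = m + 1 - r := by omega
      rw [if_neg (by omega), hh]
    rw [h1, h2, ← Finset.sum_add_distrib]
    apply Finset.sum_congr rfl
    intro r hr
    simp only [Finset.mem_range] at hr
    rcases Nat.eq_zero_or_pos r with h0 | h0
    · subst h0; simp
    rcases eq_or_ne r (m + 1) with he | he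
    · subst he
      simp [Nat.add_sub_cancel, Nat.choose_self]
    · rw [if_neg (by omega), if_neg he, ← add_nsmul]
      congr 1
      have hrr : r - 1 + 1 = r := by omega
      rw [← hrr, Nat.choose_succ_succ', hrr]

lemma myIterAdd (m : ℕ) (x y : A) :
    (⇑D)^[m] (x + y) = (⇑D)^[m] x + (⇑D)^[m] y := by
  induction m with
  | zero => rfl
  | succ m ih => rw [Function.iterate_succ_apply', ih, map_add,
      Function.iterate_succ_apply', Function.iterate_succ_apply']

lemma myIterSmul (m : ℕ) (c : ℂ) (x : A) :
    (⇑D)^[m] (c • x) = c • (⇑D)^[m] x := by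
  induction m with
  | zero => rfl
  | succ m ih => rw [Function.iterate_succ_apply', ih, D.map_smul,
      Function.iterate_succ_apply']

lemma coefmul (a b c d : ℕ) (x y : A) (h : a * b = c * d) :
    (a : A) * (b • (x * y)) = (c : A) * x * ((d : A) * y) := by
  rw [← nsmul_eq_mul, ← nsmul_eq_mul, ← nsmul_eq_mul, smul_smul, h, smul_mul_assoc,
    mul_smul_comm, smul_smul]

end aux

theorem stmt17 (n : ℕ) (hn : 2 ≤ n) (A : Type*) [Ring A] [Algebra ℂ A]
    (D : A →ₗ[ℂ] A) (hD : ∀ x y : A, D (x * y) = D x * y + x * D y)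
    (S : A → Matrix (Fin n) (Fin n) A)
    (hS : S = fun σ => Matrix.of (fun i j : Fin n =>
      if (j : ℕ) ≤ (i : ℕ) then
        (Nat.choose (i : ℕ) (j : ℕ) : A) * (⇑D)^[(i : ℕ) - (j : ℕ)] σ
      else 0)) :
    S 1 = 1 ∧
    (∀ σ τ : A, S (σ + τ) = S σ + S τ) ∧
    (∀ (c : ℂ) (σ : A), S (c • σ) = c • S σ) ∧
    (∀ σ τ : A, S (σ * τ) = S σ * S τ) := by

  subst hS
  have hD1 : D 1 = 0 := by
    have := hD 1 1
    simp only [mul_one, one_mul] at this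
    have h2 : D 1 + 0 = D 1 + D 1 := by rw [add_zero]; exact this
    exact (add_left_cancel h2).symm
  refine ⟨?_, ?_, ?_, ?_⟩
  · ext i j
    simp only [Matrix.of_apply, Matrix.one_apply]
    by_cases h : (j : ℕ) ≤ (i : ℕ)
    · rw [if_pos h]
      by_cases hij : i = j
      · subst hij
        simp
      · rw [if_neg hij]
        have hv : (i : ℕ) ≠ (j : ℕ) := fun hv => hij (Fin.ext hv)
        have : (i : ℕ) - (j : ℕ) = ((i : ℕ) - (j : ℕ) - 1) + 1 := by omega
        rw [this, Function.iterate_succ_apply, hD1, myIterZero, mul_zero]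
    · rw [if_neg h, if_neg (fun hij => h (by rw [hij]))]
  · intro σ τ
    ext i j
    simp only [Matrix.of_apply, Matrix.add_apply]
    split_ifs with h
    · rw [myIterAdd, mul_add]
    · rw [add_zero]
  · intro c σ
    ext i j
    simp only [Matrix.of_apply, Matrix.smul_apply]
    split_ifs with h
    · rw [myIterSmul, mul_smul_comm]
    · rw [smul_zero]
  · intro σ τ
    ext i j
    simp only [Matrix.of_apply, Matrix.mul_apply]
    set g : ℕ → A := fun k =>
      (if k ≤ (i : ℕ) then ((i : ℕ).choose k : A) * (⇑D)^[(i : ℕ) - k] σ else 0) *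
      (if (j : ℕ) ≤ k then ((k).choose (j : ℕ) : A) * (⇑D)^[k - (j : ℕ)] τ else 0) with hg
    have hsum : ∑ k : Fin n,
        ((if (k : ℕ) ≤ (i : ℕ) then ((i : ℕ).choose (k : ℕ) : A) * (⇑D)^[(i : ℕ) - (k : ℕ)] σ else 0) *
         (if (j : ℕ) ≤ (k : ℕ) then ((k : ℕ).choose (j : ℕ) : A) * (⇑D)^[(k : ℕ) - (j : ℕ)] τ else 0))
        = ∑ k ∈ range n, g k := by
      rw [← Fin.sum_univ_eq_sum_range g n]
    rw [hsum]
    by_cases h : (j : ℕ) ≤ (i : ℕ)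
    · rw [if_pos h]
      have hIcc : ∑ k ∈ range n, g k = ∑ k ∈ Finset.Icc (j : ℕ) (i : ℕ), g k := by
        refine (Finset.sum_subset ?_ ?_).symm
        · intro k hk
          simp only [Finset.mem_Icc] at hk
          simp only [Finset.mem_range]
          omega
        · intro k _ hk
          simp only [Finset.mem_Icc, not_and_or, not_le] at hk
          rcases hk with hk | hk
          · rw [hg]
            simp only
            rw [if_neg (show ¬ (j : ℕ) ≤ k by omega), mul_zero]
          · rw [hg]
            simp only
            rw [if_neg (show ¬ k ≤ (i : ℕ) by omega), zero_mul]
      rw [hIcc, ← Finset.Ico_add_one_right_eq_Icc, Finset.sum_Ico_eq_sum_range]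
      have hm : (i : ℕ) + 1 - (j : ℕ) = ((i : ℕ) - (j : ℕ)) + 1 := by omega
      rw [hm, myLeibniz D hD, Finset.mul_sum]
      rw [← Finset.sum_range_reflect (fun r => ((i : ℕ).choose (j : ℕ) : A) *
        (((i : ℕ) - (j : ℕ)).choose r • ((⇑D)^[r] σ * (⇑D)^[(i : ℕ) - (j : ℕ) - r] τ)))
        (((i : ℕ) - (j : ℕ)) + 1)]
      apply Finset.sum_congr rfl
      intro r hr
      simp only [Finset.mem_range] at hr
      set m := (i : ℕ) - (j : ℕ) with hmdef
      have hrm : r ≤ m := by omega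
      have e1 : m + 1 - 1 - r = m - r := by omega
      have e2 : m - (m - r) = r := by omega
      rw [e1, e2, Nat.choose_symm hrm]
      rw [hg]
      simp only
      rw [if_pos (by omega : (j : ℕ) + r ≤ (i : ℕ)), if_pos (by omega : (j : ℕ) ≤ (j : ℕ) + r)]
      have e3 : (i : ℕ) - ((j : ℕ) + r) = m - r := by omega
      have e4 : (j : ℕ) + r - (j : ℕ) = r := by omega
      rw [e3, e4]
      have hcoef : (i : ℕ).choose (j : ℕ) * m.choose r
          = (i : ℕ).choose ((j : ℕ) + r) * ((j : ℕ) + r).choose (j : ℕ) := by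
        rw [Nat.choose_mul
          (show (j : ℕ) ≤ (j : ℕ) + r by omega), e4, ← hmdef]
      exact coefmul _ _ _ _ _ _ hcoef
    · rw [if_neg h]
      refine (Finset.sum_eq_zero ?_).symm
      intro k _
      rw [hg]
      simp only
      rcases le_or_gt k (i : ℕ) with h1 | h1
      · rw [if_neg (by omega : ¬ (j : ℕ) ≤ k), mul_zero]
      · rw [if_neg (by omega), zero_mul]

end
end
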